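/- There exists a scattered ω-algebraic domain X (with the Scott topology) and subsets A, B ⊆ X such that A, B, X\A, X\B are pairwise incomparable under Wadge reducibility, i.e., none is the continuous preimage of another. -/

import Mathlib

/-- A set is Scott open: it is upward closed and every nonempty directed set whose
supremum lies in it meets it. -/
def ScottOpen {X : Type*} [Preorder X] (U : Set X) : Prop :=
  IsUpperSet U ∧ ∀ d : Set X, d.Nonempty → DirectedOn (· ≤ ·) d →
    ∀ a : X, IsLUB d a → a ∈ U → (d ∩ U).Nonempty

/-- An ω-algebraic domain with the Scott topology: a dcpo whose topology is the Scott
topology, whose set of compact elements is countable, and whose compact elements'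
upward closures form a basis of the topology. -/
def IsOmegaAlgebraicDomain (X : Type*) [PartialOrder X] [TopologicalSpace X] : Prop :=
  (∀ d : Set X, d.Nonempty → DirectedOn (· ≤ ·) d → ∃ a : X, IsLUB d a) ∧
  (∀ U : Set X, IsOpen U ↔ ScottOpen U) ∧
  {c : X | IsOpen {x : X | c ≤ x}}.Countable ∧
  TopologicalSpace.IsTopologicalBasis
    ((fun c : X => {x : X | c ≤ x}) '' {c : X | IsOpen {x : X | c ≤ x}})

/-- A topological space is scattered iff every nonempty subset has a point isolated in
the subspace topology. -/
def IsScatteredSpace (X : Type*) [TopologicalSpace X] : Prop :=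
  ∀ S : Set X, S.Nonempty → ∃ x ∈ S, ∃ U : Set X, IsOpen U ∧ U ∩ S = {x}

/-- Wadge reducibility: `A = f⁻¹(B)` for some continuous `f : X → X`. -/
def WadgeRed {X : Type*} [TopologicalSpace X] (A B : Set X) : Prop :=
  ∃ f : X → X, Continuous f ∧ A = f ⁻¹' B

/-!
The witness is the hexagon: six points on a cycle, the even ones minimal and each odd one above
its two neighbours, with the Alexandrov topology. A countable poset without infinite ascending
chains is a scattered ω-algebraic domain in its Alexandrov topology: directed sets have a
greatest element, so Scott open means upper, every point is compact, and a maximal point of a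
set is isolated in it by its principal upper set. Continuous maps are the monotone ones, and
the hexagon has only 234 monotone self-maps; checking them all shows that for `A = {0, 1}` and
`B = {0, 1, 4}` no set among `A, Aᶜ, B, Bᶜ` is the preimage of another.
-/

open Topology

section UpperSetTopology

variable {X : Type*}

lemma DirectedOn.exists_isGreatest [Preorder X] [WellFoundedGT X] {d : Set X}
    (hne : d.Nonempty) (hd : DirectedOn (· ≤ ·) d) : ∃ m, IsGreatest d m := by
  obtain ⟨m, hm⟩ := exists_maximal_of_wellFoundedGT (· ∈ d) hne
  exact ⟨m, hm.1, hd.is_top_of_is_max hm.1 fun _ ha => hm.2 ha⟩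

lemma scottOpen_iff_isUpperSet [Preorder X] [WellFoundedGT X] {U : Set X} :
    ScottOpen U ↔ IsUpperSet U := by
  refine ⟨And.left, fun hU => ⟨hU, fun d hne hd a ha haU => ?_⟩⟩
  obtain ⟨m, hm⟩ := hd.exists_isGreatest hne
  exact ⟨m, hm.1, hU (ha.2 hm.2) haU⟩

variable [PartialOrder X] [WellFoundedGT X] [TopologicalSpace X] [Topology.IsUpperSet X]

lemma isOmegaAlgebraicDomain_of_isUpperSet [Countable X] : IsOmegaAlgebraicDomain X := by
  have isOpen_Ici (c : X) : IsOpen {x | c ≤ x} :=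
    IsUpperSet.isOpen_iff_isUpperSet.2 (isUpperSet_Ici c)
  refine ⟨fun d hne hd => ?_, fun U => ?_, Set.to_countable _, ?_⟩
  · obtain ⟨m, hm⟩ := hd.exists_isGreatest hne
    exact ⟨m, hm.isLUB⟩
  · rw [IsUpperSet.isOpen_iff_isUpperSet, scottOpen_iff_isUpperSet]
  · refine TopologicalSpace.isTopologicalBasis_of_isOpen_of_nhds ?_ fun a U haU hU => ?_
    · rintro _ ⟨c, hc, rfl⟩
      exact hc
    · exact ⟨_, ⟨a, isOpen_Ici a, rfl⟩, le_refl a, fun x hx =>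
        IsUpperSet.isOpen_iff_isUpperSet.1 hU hx haU⟩

lemma isScatteredSpace_of_isUpperSet : IsScatteredSpace X := by
  intro S hS
  obtain ⟨x, hxS, hx⟩ := exists_maximal_of_wellFoundedGT (· ∈ S) hS
  refine ⟨x, hxS, Set.Ici x, IsUpperSet.isOpen_iff_isUpperSet.2 (isUpperSet_Ici x), ?_⟩
  ext y
  refine ⟨fun ⟨hxy, hy⟩ => le_antisymm (hx hy hxy) hxy, fun hy => ?_⟩
  rw [Set.mem_singleton_iff.1 hy]
  exact ⟨le_refl x, hxS⟩

end UpperSetTopology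

lemma WadgeRed.monotone_of_isUpperSet {X : Type*} [Preorder X] [TopologicalSpace X]
    [Topology.IsUpperSet X] {S T : Set X} (h : WadgeRed S T) :
    ∃ f : X → X, Monotone f ∧ S = f ⁻¹' T := by
  obtain ⟨f, hf, hST⟩ := h
  exact ⟨f, IsUpperSet.monotone_iff_continuous.2 hf, hST⟩

structure Hexagon where
  pos : Fin 6
deriving DecidableEq, Fintype

namespace Hexagon

def Le (x y : Hexagon) : Prop :=
  x = y ∨ (x.pos.val % 2 = 0 ∧ (y.pos = x.pos + 1 ∨ x.pos = y.pos + 1))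

instance : DecidableRel Le := fun _ _ => by unfold Le; infer_instance

instance : PartialOrder Hexagon where
  le := Le
  le_refl _ := Or.inl rfl
  le_trans := by decide
  le_antisymm := by decide

instance : DecidableRel ((· ≤ ·) : Hexagon → Hexagon → Prop) :=
  inferInstanceAs (DecidableRel Le)

instance : TopologicalSpace Hexagon := upperSet Hexagon

instance : Topology.IsUpperSet Hexagon := ⟨rfl⟩

def A : Finset Hexagon := {⟨0⟩, ⟨1⟩}

def B : Finset Hexagon := {⟨0⟩, ⟨1⟩, ⟨4⟩}

def family : Finset (Finset Hexagon) := {A, Aᶜ, B, Bᶜ}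

def ofValues (a b c d e g : Hexagon) : Hexagon → Hexagon
  | ⟨0⟩ => a | ⟨1⟩ => b | ⟨2⟩ => c | ⟨3⟩ => d | ⟨4⟩ => e | ⟨5⟩ => g

lemma eq_ofValues (f : Hexagon → Hexagon) :
    f = ofValues (f ⟨0⟩) (f ⟨1⟩) (f ⟨2⟩) (f ⟨3⟩) (f ⟨4⟩) (f ⟨5⟩) := by
  funext ⟨i⟩
  fin_cases i <;> rfl

-- The hypotheses are the six edges of the hexagon, in an order that lets `decide` discard
-- a non-monotone map as soon as one of its values is chosen.
set_option maxRecDepth 10000 in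
lemma ofValues_preimage_ne : ∀ a b : Hexagon, a ≤ b → ∀ c, c ≤ b → ∀ d, c ≤ d → ∀ e, e ≤ d →
    ∀ g, e ≤ g → a ≤ g → ∀ S ∈ family, ∀ T ∈ family, S ≠ T →
      ∃ x, ¬ (x ∈ S ↔ ofValues a b c d e g x ∈ T) := by
  decide +kernel

lemma preimage_ne_of_monotone {f : Hexagon → Hexagon} (hf : Monotone f) {S T : Finset Hexagon}
    (hS : S ∈ family) (hT : T ∈ family) (hST : S ≠ T) : (S : Set Hexagon) ≠ f ⁻¹' T := by
  obtain ⟨x, hx⟩ := ofValues_preimage_ne (f ⟨0⟩) (f ⟨1⟩) (hf (by decide)) (f ⟨2⟩)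
    (hf (by decide)) (f ⟨3⟩) (hf (by decide)) (f ⟨4⟩) (hf (by decide)) (f ⟨5⟩)
    (hf (by decide)) (hf (by decide)) S hS T hT hST
  rw [← eq_ofValues] at hx
  exact fun h => hx (Set.ext_iff.1 h x)

lemma not_wadgeRed {S T : Finset Hexagon} (hS : S ∈ family) (hT : T ∈ family) (hST : S ≠ T) :
    ¬ WadgeRed (S : Set Hexagon) T := fun h =>
  let ⟨_, hf, h⟩ := h.monotone_of_isUpperSet
  preimage_ne_of_monotone hf hS hT hST h

end Hexagon

/-- There is a scattered ω-algebraic domain `X` with subsets `A`, `B` such that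
`A, B, Aᶜ, Bᶜ` are pairwise Wadge incomparable. -/
theorem exists_scattered_domain_wadge_antichain :
    ∃ (X : Type) (po : PartialOrder X) (t : TopologicalSpace X),
      @IsOmegaAlgebraicDomain X po t ∧ @IsScatteredSpace X t ∧
      ∃ A B : Set X,
        ¬ @WadgeRed X t A Aᶜ ∧ ¬ @WadgeRed X t Aᶜ A ∧
        ¬ @WadgeRed X t B Bᶜ ∧ ¬ @WadgeRed X t Bᶜ B ∧
        ¬ @WadgeRed X t A B ∧ ¬ @WadgeRed X t B A ∧
        ¬ @WadgeRed X t A Bᶜ ∧ ¬ @WadgeRed X t Bᶜ A ∧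
        ¬ @WadgeRed X t Aᶜ B ∧ ¬ @WadgeRed X t B Aᶜ ∧
        ¬ @WadgeRed X t Aᶜ Bᶜ ∧ ¬ @WadgeRed X t Bᶜ Aᶜ := by
  refine ⟨Hexagon, inferInstance, inferInstance, isOmegaAlgebraicDomain_of_isUpperSet,
    isScatteredSpace_of_isUpperSet, Hexagon.A, Hexagon.B, ?_⟩
  simp only [← Finset.coe_compl]
  refine ⟨?_, ?_, ?_, ?_, ?_, ?_, ?_, ?_, ?_, ?_, ?_, ?_⟩ <;>
    exact Hexagon.not_wadgeRed (by decide) (by decide) (by decide)
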